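/- Let N and M be well-formed labeled portnets and let (M,φ) be a partial mirror of N. Let S = compose({N,M}) with initial marking i_S = i_N + i_M. For any markings m_0, …, m_n, m_0' reachable from i_S, all transitions t_1,…,t_n of N with λ(t_i) = receive, and a transition u of M with λ(u) = send, such that m_0 →t_1 … →t_n m_n and m_0 →u m_0', there are markings m_1', …, m_n' such that m_0' →t_1 … →t_n m_n' and m_n →u m_n'. -/

import Mathlib

namespace PortNets

/-- Direction of communication of a transition: send, receive, or internal (τ). -/
inductive Dir : Type
  | send | receive | tau
deriving DecidableEq

/-- Preset of a node `x` with respect to a flow relation `F`. -/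
def pre {Node : Type} (F : Set (Node × Node)) (x : Node) : Set Node := {y | (y, x) ∈ F}

/-- Postset of a node `x` with respect to a flow relation `F`. -/
def post {Node : Type} (F : Set (Node × Node)) (x : Node) : Set Node := {y | (x, y) ∈ F}

/-- Raw data of an open Petri net (with labels): internal places `P`, input places `I`,
output places `O`, transitions `T`, flow `F`, initial and final places, labeling `μ`. -/
structure OPN (Node L : Type) where
  P : Set Node
  I : Set Node
  O : Set Node
  T : Set Node
  F : Set (Node × Node)
  init : Set Node
  fin : Set Node
  μ : Node → L

variable {Node L : Type}

/-- All places of an OPN. -/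
def OPN.places (N : OPN Node L) : Set Node := N.P ∪ N.I ∪ N.O

/-- All nodes of an OPN. -/
def OPN.nodes (N : OPN Node L) : Set Node := N.places ∪ N.T

/-- Structural requirements of an open Petri net. -/
structure IsOPN (N : OPN Node L) : Prop where
  disjPI : N.P ∩ N.I = ∅
  disjPO : N.P ∩ N.O = ∅
  disjIO : N.I ∩ N.O = ∅
  disjPT : N.places ∩ N.T = ∅
  flow_sub : N.F ⊆ (N.places ×ˢ N.T) ∪ (N.T ×ˢ N.places)
  no_pre_I : ∀ x ∈ N.I, pre N.F x = ∅
  no_post_O : ∀ x ∈ N.O, post N.F x = ∅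
  not_both : ∀ t ∈ N.T, ¬((pre N.F t ∩ N.I).Nonempty ∧ (post N.F t ∩ N.O).Nonempty)
  init_sub : N.init ⊆ N.P
  fin_sub : N.fin ⊆ N.P

open Classical in
noncomputable def dir (N : OPN Node L) (t : Node) : Dir :=
  if (post N.F t ∩ N.O).Nonempty then Dir.send
  else if (pre N.F t ∩ N.I).Nonempty then Dir.receive
  else Dir.tau

open Classical in
noncomputable def fireAt (F : Set (Node × Node)) (m : Node → ℕ) (t : Node) : Node → ℕ :=
  fun p => m p - (if (p, t) ∈ F then 1 else 0) + (if (t, p) ∈ F then 1 else 0)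

/-- `Fires T F m t m'`: transition `t` is enabled in marking `m` and firing it yields `m'`. -/
def Fires (T : Set Node) (F : Set (Node × Node)) (m : Node → ℕ) (t : Node)
    (m' : Node → ℕ) : Prop :=
  t ∈ T ∧ (∀ p, (p, t) ∈ F → 1 ≤ m p) ∧ m' = fireAt F m t

/-- Firing a finite sequence of transitions. -/
inductive FireSeq (T : Set Node) (F : Set (Node × Node)) :
    (Node → ℕ) → List Node → (Node → ℕ) → Prop
  | nil (m : Node → ℕ) : FireSeq T F m [] m
  | cons {m m' m'' : Node → ℕ} {t : Node} {σ : List Node} :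
      Fires T F m t m' → FireSeq T F m' σ m'' → FireSeq T F m (t :: σ) m''

/-- Reachability of markings. -/
def Reach (T : Set Node) (F : Set (Node × Node)) (m m' : Node → ℕ) : Prop :=
  ∃ σ : List Node, FireSeq T F m σ m'

/-- Weak termination: from every marking reachable from `m0`, the marking `mf` is reachable. -/
def WeaklyTerminates (T : Set Node) (F : Set (Node × Node)) (m0 mf : Node → ℕ) : Prop :=
  ∀ m, Reach T F m0 m → Reach T F m mf

/-- The marking putting one token on each element of a set of places. -/
noncomputable def mark (s : Set Node) : Node → ℕ := s.indicator fun _ => 1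

/-- Flow relation of the skeleton: all arcs not adjacent to interface places. -/
def skF (N : OPN Node L) : Set (Node × Node) :=
  {x ∈ N.F | x.1 ∉ N.I ∪ N.O ∧ x.2 ∉ N.I ∪ N.O}

/-- The skeleton is a state machine: each transition has at most one place in its
preset and at most one in its postset. -/
def IsSM (N : OPN Node L) : Prop :=
  ∀ t ∈ N.T, (pre (skF N) t).Subsingleton ∧ (post (skF N) t).Subsingleton

/-- `x` lies on a path from `i` to `f` w.r.t. flow `F`. -/
def OnPath (F : Set (Node × Node)) (i f x : Node) : Prop :=
  ∃ l : List Node, l ≠ [] ∧ List.Chain' (fun a b => (a, b) ∈ F) l ∧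
    l.head? = some i ∧ l.getLast? = some f ∧ x ∈ l

/-- Workflow net (with places `P`, transitions `T`, flow `F`): `i` is the unique place with
empty preset, `f` the unique place with empty postset, and every node is on a path
from `i` to `f`. -/
def IsWFNOn (P T : Set Node) (F : Set (Node × Node)) (i f : Node) : Prop :=
  i ∈ P ∧ f ∈ P ∧ pre F i = ∅ ∧ post F f = ∅ ∧
    (∀ p ∈ P, pre F p = ∅ → p = i) ∧
    (∀ p ∈ P, post F p = ∅ → p = f) ∧
    (∀ x ∈ P ∪ T, OnPath F i f x)

/-- Transition `t` is connected (by an arc, in either direction) to node `x`. -/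
def connected (N : OPN Node L) (t x : Node) : Prop := (x, t) ∈ N.F ∨ (t, x) ∈ N.F

/-- A labeled portnet: an OPN whose skeleton is a state-machine workflow net, with
singleton `init` and `fin`, every transition connected to exactly one interface place,
transitions sharing an interface place sharing a label, and transitions sharing a
label sharing their interface place connections. -/
structure IsPortnet (N : OPN Node L) : Prop where
  isOPN : IsOPN N
  isSM : IsSM N
  init_single : ∃ i, N.init = {i}
  fin_single : ∃ f, N.fin = {f}
  isWFN : ∀ i f, N.init = {i} → N.fin = {f} → IsWFNOn N.P N.T (skF N) i f
  one_iface : ∀ t ∈ N.T, ∃! x, x ∈ N.I ∪ N.O ∧ connected N t x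
  same_iface_label : ∀ x ∈ N.I ∪ N.O, ∀ t t', t ∈ N.T → t' ∈ N.T →
    connected N t x → connected N t' x → N.μ t = N.μ t'
  same_label_iface : ∀ t ∈ N.T, ∀ t' ∈ N.T, N.μ t = N.μ t' →
    ∀ x ∈ N.I ∪ N.O, (connected N t x ↔ connected N t' x)

/-- Observable choices: distinct transitions in the postset of a place have distinct labels. -/
def ObservableChoices (N : OPN Node L) : Prop :=
  ∀ p ∈ N.P, ∀ t ∈ post N.F p, ∀ t' ∈ post N.F p, t ≠ t' → N.μ t ≠ N.μ t'

/-- Choice property: all transitions in the postset of a place have the same direction. -/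
def ChoiceProp (N : OPN Node L) : Prop :=
  ∀ p ∈ N.P, ∀ t ∈ post N.F p, ∀ t' ∈ post N.F p, dir N t = dir N t'

/-- Diamond property. -/
def DiamondProp (N : OPN Node L) : Prop :=
  ∀ p ∈ N.P, ∀ t ∈ post N.F p, ∀ t' ∈ post N.F p, dir N t ≠ dir N t' →
    ∀ q ∈ post (skF N) t, ∀ q' ∈ post (skF N) t',
      ∃ u ∈ post (skF N) q, ∃ u' ∈ post (skF N) q',
        (post (skF N) u ∩ post (skF N) u').Nonempty ∧
        N.μ t = N.μ u' ∧ N.μ t' = N.μ u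

/-- Loop property. -/
def LoopProp (N : OPN Node L) : Prop :=
  ∀ p ∈ N.P, ∀ t ∈ post N.F p, ∀ t' ∈ post N.F p, t ≠ t' → dir N t = dir N t' →
    ∀ (l : List Node) (t'' : Node),
      List.Chain' (fun a b => (a, b) ∈ N.F) (p :: t :: (l ++ [t''])) →
      t'' ∈ N.T → N.μ t'' = N.μ t' →
      (∀ u ∈ l, u ∈ N.T → N.μ u ≠ N.μ t') →
      ∃ v ∈ t :: (l ++ [t'']), v ∈ N.T ∧ dir N v ≠ dir N t

/-- Well-formed labeled portnet. -/
def WellFormed (N : OPN Node L) : Prop :=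
  IsPortnet N ∧ ObservableChoices N ∧ DiamondProp N ∧ LoopProp N

/-- `(M, φ)` is a partial mirror of the labeled portnet `N`. -/
structure IsPartialMirror (N M : OPN Node L) (φ : Node → Node) : Prop where
  portN : IsPortnet N
  portM : IsPortnet M
  inj : Set.InjOn φ M.nodes
  mapsP : ∀ x ∈ M.P, φ x ∈ N.P
  mapsT : ∀ x ∈ M.T, φ x ∈ N.T
  mapsI : ∀ x ∈ M.I, φ x ∈ N.O
  mapsO : ∀ x ∈ M.O, φ x ∈ N.I
  flow_same : ∀ x y, (x, y) ∈ M.F → x ∉ M.I → y ∉ M.O → (φ x, φ y) ∈ N.F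
  flow_rev : ∀ x y, (x, y) ∈ M.F → (x ∈ M.I ∨ y ∈ M.O) → (φ y, φ x) ∈ N.F
  init_eq : φ '' M.init = N.init
  fin_eq : φ '' M.fin = N.fin
  lab : ∀ t ∈ M.T, M.μ t = N.μ (φ t)
  send_cover : ∀ p ∈ M.P, ∀ t, (φ p, t) ∈ N.F → dir N t = Dir.send →
    ∃ t', (p, t') ∈ M.F ∧ φ t' = t

/-- Composability of two OPNs. -/
def Composable (N M : OPN Node L) : Prop :=
  (N.nodes ∩ M.nodes = (N.I ∪ N.O) ∩ (M.I ∪ M.O)) ∧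
  (((N.I ∩ M.O) ∪ (M.I ∩ N.O)).Nonempty →
    N.O ⊆ M.I ∧ M.O ⊆ N.I ∧ N.I ∩ M.I = ∅ ∧ N.O ∩ M.O = ∅)

open Classical in
noncomputable def compose2 (N M : OPN Node L) : OPN Node L where
  P := N.P ∪ M.P ∪ ((N.I ∪ M.I) ∩ (N.O ∪ M.O))
  I := (N.I ∪ M.I) \ (N.O ∪ M.O)
  O := (N.O ∪ M.O) \ (N.I ∪ M.I)
  T := N.T ∪ M.T
  F := N.F ∪ M.F
  init := N.init ∪ M.init
  fin := N.fin ∪ M.fin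
  μ := fun x => if x ∈ N.T then N.μ x else M.μ x

end PortNets

namespace PortNets

/-!
A send transition of `M` has no input place in its preset, and no output place either, so it
consumes only from internal places of `M`. A transition of `N` consumes only from places of
`N`, and composability allows `N` and `M` to share interface places only. Hence the send and
each receive of `N` have disjoint presets, and transitions with disjoint presets commute.
-/

variable {Node L : Type}

section Firing

variable {T : Set Node} {F : Set (Node × Node)}

theorem Fires.swap_of_disjoint_pre {m m₁ m₂ : Node → ℕ} {t u : Node}
    (hd : Disjoint (pre F t) (pre F u))
    (ht : Fires T F m t m₁) (hu : Fires T F m u m₂) :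
    ∃ m₃, Fires T F m₂ t m₃ ∧ Fires T F m₁ u m₃ := by
  obtain ⟨htT, htE, rfl⟩ := ht
  obtain ⟨huT, huE, rfl⟩ := hu
  have hd' : ∀ p, (p, t) ∈ F → (p, u) ∉ F := fun _ hp => Set.disjoint_left.1 hd hp
  refine ⟨fireAt F (fireAt F m u) t, ⟨htT, fun p hp => ?_, rfl⟩, huT, fun p hp => ?_, ?_⟩
  · have := htE p hp
    simp only [fireAt, if_neg (hd' p hp)]
    omega
  · have := huE p hp
    simp only [fireAt, if_neg fun h => hd' p h hp]
    omega
  · -- enabledness and disjoint presets keep the truncated `ℕ` subtractions exact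
    funext p
    have := htE p
    have := huE p
    have := hd' p
    simp only [fireAt]
    split_ifs <;> simp_all

theorem FireSeq.swap_of_disjoint_pre {m₀ mₙ m₀' : Node → ℕ} {ts : List Node} {u : Node}
    (hd : ∀ t ∈ ts, Disjoint (pre F t) (pre F u))
    (hts : FireSeq T F m₀ ts mₙ) (hu : Fires T F m₀ u m₀') :
    ∃ mₙ', FireSeq T F m₀' ts mₙ' ∧ Fires T F mₙ u mₙ' := by
  induction hts generalizing m₀' with
  | nil m => exact ⟨m₀', FireSeq.nil _, hu⟩
  | cons ht _ ih =>
    obtain ⟨m₁', ht', hu'⟩ := Fires.swap_of_disjoint_pre (hd _ List.mem_cons_self) ht hu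
    obtain ⟨mₙ', hts', hu''⟩ := ih (fun t h => hd t (List.mem_cons_of_mem _ h)) hu'
    exact ⟨mₙ', FireSeq.cons ht' hts', hu''⟩

end Firing

namespace IsOPN

variable {N : OPN Node L}

theorem not_mem_places_of_mem_T (hN : IsOPN N) {t : Node} (ht : t ∈ N.T) : t ∉ N.places :=
  fun hp => hN.disjPT.subset ⟨hp, ht⟩

theorem mem_places_of_mem_pre (hN : IsOPN N) {p t : Node} (ht : t ∈ N.T) (hpt : (p, t) ∈ N.F) :
    p ∈ N.places := by
  rcases hN.flow_sub hpt with h | h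
  · exact h.1
  · exact absurd h.2 (hN.not_mem_places_of_mem_T ht)

theorem mem_nodes_of_mem_F (hN : IsOPN N) {x y : Node} (hxy : (x, y) ∈ N.F) : x ∈ N.nodes ∧ y ∈ N.nodes := by
  rcases hN.flow_sub hxy with h | h
  · exact ⟨Or.inl h.1, Or.inr h.2⟩
  · exact ⟨Or.inr h.1, Or.inl h.2⟩

theorem mem_P_of_mem_pre_of_dir_eq_send (hN : IsOPN N) {p t : Node} (ht : t ∈ N.T)
    (hsend : dir N t = Dir.send) (hpt : (p, t) ∈ N.F) : p ∈ N.P := by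
  have hout : (post N.F t ∩ N.O).Nonempty := by
    by_contra h
    simp only [dir, if_neg h] at hsend
    split_ifs at hsend
  rcases hN.mem_places_of_mem_pre ht hpt with (hP | hI) | hO
  · exact hP
  · exact absurd ⟨⟨p, hpt, hI⟩, hout⟩ (hN.not_both t ht)
  · have : t ∈ post N.F p := hpt
    simp [hN.no_post_O p hO] at this

theorem not_mem_interface_of_mem_P (hN : IsOPN N) {p : Node} (hp : p ∈ N.P) : p ∉ N.I ∪ N.O := by
  rintro (hI | hO)
  · exact hN.disjPI.subset ⟨hp, hI⟩
  · exact hN.disjPO.subset ⟨hp, hO⟩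

end IsOPN

namespace Composable

variable {N M : OPN Node L}

theorem mem_interface (hc : Composable N M) {x : Node} (hN : x ∈ N.nodes) (hM : x ∈ M.nodes) :
    x ∈ N.I ∪ N.O ∧ x ∈ M.I ∪ M.O := by
  have h : x ∈ N.nodes ∩ M.nodes := ⟨hN, hM⟩
  rwa [hc.1] at h

theorem not_mem_nodes_right_of_mem_T (hc : Composable N M) (hN : IsOPN N) {t : Node} (ht : t ∈ N.T) :
    t ∉ M.nodes := fun hM =>
  hN.not_mem_places_of_mem_T ht <| by
    rcases (hc.mem_interface (Or.inr ht) hM).1 with h | h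
    · exact Or.inl (Or.inr h)
    · exact Or.inr h

theorem not_mem_nodes_left_of_mem_T (hc : Composable N M) (hM : IsOPN M) {u : Node} (hu : u ∈ M.T) :
    u ∉ N.nodes := fun hN =>
  hM.not_mem_places_of_mem_T hu <| by
    rcases (hc.mem_interface hN (Or.inr hu)).2 with h | h
    · exact Or.inl (Or.inr h)
    · exact Or.inr h

theorem not_mem_nodes_left_of_mem_P (hc : Composable N M) (hM : IsOPN M) {p : Node} (hp : p ∈ M.P) :
    p ∉ N.nodes := fun hN =>
  hM.not_mem_interface_of_mem_P hp (hc.mem_interface hN (Or.inl (Or.inl (Or.inl hp)))).2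

end Composable

theorem mem_F_left_of_mem_compose2_F {N M : OPN Node L} (hM : IsOPN M) {x y : Node}
    (hxy : (x, y) ∈ (compose2 N M).F) (hy : y ∉ M.nodes) : (x, y) ∈ N.F :=
  hxy.resolve_right fun h => hy (hM.mem_nodes_of_mem_F h).2

theorem mem_F_right_of_mem_compose2_F {N M : OPN Node L} (hN : IsOPN N) {x y : Node}
    (hxy : (x, y) ∈ (compose2 N M).F) (hy : y ∉ N.nodes) : (x, y) ∈ M.F :=
  hxy.resolve_left fun h => hy (hN.mem_nodes_of_mem_F h).2

theorem swap_send_receive_general {Node L : Type} (N M : OPN Node L)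
    (hN : WellFormed N) (hM : WellFormed M)
    (hcomp : Composable N M)
    (m0 mn m0' : Node → ℕ) (ts : List Node) (u : Node)
    (hts : ∀ x ∈ ts, x ∈ N.T ∧ dir N x = Dir.receive)
    (hu : u ∈ M.T) (husend : dir M u = Dir.send)
    (h1 : FireSeq (compose2 N M).T (compose2 N M).F m0 ts mn)
    (h2 : Fires (compose2 N M).T (compose2 N M).F m0 u m0') :
    ∃ mn' : Node → ℕ,
      FireSeq (compose2 N M).T (compose2 N M).F m0' ts mn' ∧
      Fires (compose2 N M).T (compose2 N M).F mn u mn' := by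
  have hNopn : IsOPN N := hN.1.isOPN
  have hMopn : IsOPN M := hM.1.isOPN
  refine FireSeq.swap_of_disjoint_pre (fun t ht => Set.disjoint_left.2 fun p hpt hpu => ?_) h1 h2
  have htN : t ∈ N.T := (hts t ht).1
  have hpt' : (p, t) ∈ N.F :=
    mem_F_left_of_mem_compose2_F hMopn hpt (hcomp.not_mem_nodes_right_of_mem_T hNopn htN)
  have hpu' : (p, u) ∈ M.F :=
    mem_F_right_of_mem_compose2_F hNopn hpu (hcomp.not_mem_nodes_left_of_mem_T hMopn hu)
  exact hcomp.not_mem_nodes_left_of_mem_P hMopn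
    (hMopn.mem_P_of_mem_pre_of_dir_eq_send hu husend hpu') (hNopn.mem_nodes_of_mem_F hpt').1

/-- in the composition of a well-formed labeled portnet `N` and its
well-formed partial mirror `(M, φ)`, an enabled send transition `u` of `M` is not
disabled by firing a sequence of receive transitions of `N`; the send may equivalently
happen before or after, reaching the same marking. -/
theorem swap_send_receive {Node L : Type} (N M : OPN Node L) (φ : Node → Node)
    (hN : WellFormed N) (hM : WellFormed M)
    (hmir : IsPartialMirror N M φ) (hcomp : Composable N M)
    (m0 mn m0' : Node → ℕ) (ts : List Node) (u : Node)
    (hreach : Reach (compose2 N M).T (compose2 N M).F (mark N.init + mark M.init) m0)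
    (hts : ∀ x ∈ ts, x ∈ N.T ∧ dir N x = Dir.receive)
    (hu : u ∈ M.T) (husend : dir M u = Dir.send)
    (h1 : FireSeq (compose2 N M).T (compose2 N M).F m0 ts mn)
    (h2 : Fires (compose2 N M).T (compose2 N M).F m0 u m0') :
    ∃ mn' : Node → ℕ,
      FireSeq (compose2 N M).T (compose2 N M).F m0' ts mn' ∧
      Fires (compose2 N M).T (compose2 N M).F mn u mn' :=
  swap_send_receive_general N M hN hM hcomp m0 mn m0' ts u hts hu husend h1 h2

end PortNets
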